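/- (Backward key determinism) In CCSKP, if t1 and t2 are coinitial backward transitions with key(t1) = key(t2), then t1 = t2 (same label and same target). -/
import Mathlib


namespace CCSKP

/-- Action labels: names, co-names and τ. -/
inductive Act : Type where
  | name (a : ℕ)
  | coname (a : ℕ)
  | tau
deriving DecidableEq

/-- Complement of an action label. -/
def Act.bar : Act → Act
  | .name a => .coname a
  | .coname a => .name a
  | .tau => .tau

/-- Directions Left / Right. -/
inductive Dir : Type where
  | L
  | R
deriving DecidableEq

/-- The opposite direction. -/
def Dir.op : Dir → Dir
  | .L => .R
  | .R => .L

/-- Selection according to a direction. -/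
def Dir.sel {α : Type*} : Dir → α → α → α
  | .L, x, _ => x
  | .R, _, y => y

/-- Keys. -/
abbrev Key := ℕ

/-- CCSK processes. -/
inductive Proc : Type where
  | nil
  | pre (α : Act) (X : Proc)
  | res (X : Proc) (a : ℕ)
  | sum (X Y : Proc)
  | par (X Y : Proc)
  | keyed (α : Act) (k : Key) (X : Proc)
deriving DecidableEq

/-- The set of keys occurring in a process. -/
def Proc.keys : Proc → Finset Key
  | .nil => ∅
  | .pre _ X => X.keys
  | .res X _ => X.keys
  | .sum X Y => X.keys ∪ Y.keys
  | .par X Y => X.keys ∪ Y.keys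
  | .keyed _ k X => insert k X.keys

/-- Standard processes: no keys. -/
def Proc.Std (X : Proc) : Prop := X.keys = ∅

/-- Proof keyed labels. -/
inductive PLab : Type where
  | act (α : Act) (k : Key)
  | par (d : Dir) (θ : PLab)
  | sum (d : Dir) (θ : PLab)
  | syn (θL θR : PLab)
deriving DecidableEq

/-- The action ℓ(θ) of a proof keyed label. -/
def PLab.lab : PLab → Act
  | .act α _ => α
  | .par _ θ => θ.lab
  | .sum _ θ => θ.lab
  | .syn _ _ => .tau

/-- The key of a proof keyed label. -/
def PLab.key : PLab → Key
  | .act _ k => k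
  | .par _ θ => θ.key
  | .sum _ θ => θ.key
  | .syn θL _ => θL.key

/-- θ is of the form υ α[k] (no synchronisation pair). -/
def PLab.IsPre : PLab → Prop
  | .act _ _ => True
  | .par _ θ => θ.IsPre
  | .sum _ θ => θ.IsPre
  | .syn _ _ => False

/-- Forward transitions of CCSKP. -/
inductive Fwd : Proc → PLab → Proc → Prop where
  | act {α : Act} {X : Proc} {k : Key} :
      X.keys = ∅ → Fwd (.pre α X) (.act α k) (.keyed α k X)
  | pre {X X' : Proc} {θ : PLab} {α : Act} {k : Key} :
      Fwd X θ X' → θ.key ≠ k → Fwd (.keyed α k X) θ (.keyed α k X')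
  | res {X X' : Proc} {θ : PLab} {a : ℕ} :
      Fwd X θ X' → θ.lab ≠ .name a → θ.lab ≠ .coname a →
      Fwd (.res X a) θ (.res X' a)
  | parL {X X' Y : Proc} {θ : PLab} :
      Fwd X θ X' → θ.key ∉ Y.keys → Fwd (.par X Y) (.par .L θ) (.par X' Y)
  | parR {X Y Y' : Proc} {θ : PLab} :
      Fwd Y θ Y' → θ.key ∉ X.keys → Fwd (.par X Y) (.par .R θ) (.par X Y')
  | syn {X X' Y Y' : Proc} {θ1 θ2 : PLab} :
      Fwd X θ1 X' → Fwd Y θ2 Y' → θ1.IsPre → θ2.IsPre → θ1.lab ≠ .tau →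
      θ2.lab = θ1.lab.bar → θ2.key = θ1.key →
      Fwd (.par X Y) (.syn θ1 θ2) (.par X' Y')
  | sumL {X X' Y : Proc} {θ : PLab} :
      Fwd X θ X' → Y.keys = ∅ → Fwd (.sum X Y) (.sum .L θ) (.sum X' Y)
  | sumR {X Y Y' : Proc} {θ : PLab} :
      Fwd Y θ Y' → X.keys = ∅ → Fwd (.sum X Y) (.sum .R θ) (.sum X Y')

/-- Backward transitions of CCSKP: the exactly symmetric rules. -/
inductive Bwd : Proc → PLab → Proc → Prop where
  | act {α : Act} {X : Proc} {k : Key} :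
      X.keys = ∅ → Bwd (.keyed α k X) (.act α k) (.pre α X)
  | pre {X' X : Proc} {θ : PLab} {α : Act} {k : Key} :
      Bwd X' θ X → θ.key ≠ k → Bwd (.keyed α k X') θ (.keyed α k X)
  | res {X' X : Proc} {θ : PLab} {a : ℕ} :
      Bwd X' θ X → θ.lab ≠ .name a → θ.lab ≠ .coname a →
      Bwd (.res X' a) θ (.res X a)
  | parL {X' X Y : Proc} {θ : PLab} :
      Bwd X' θ X → θ.key ∉ Y.keys → Bwd (.par X' Y) (.par .L θ) (.par X Y)
  | parR {X Y' Y : Proc} {θ : PLab} :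
      Bwd Y' θ Y → θ.key ∉ X.keys → Bwd (.par X Y') (.par .R θ) (.par X Y)
  | syn {X' X Y' Y : Proc} {θ1 θ2 : PLab} :
      Bwd X' θ1 X → Bwd Y' θ2 Y → θ1.IsPre → θ2.IsPre → θ1.lab ≠ .tau →
      θ2.lab = θ1.lab.bar → θ2.key = θ1.key →
      Bwd (.par X' Y') (.syn θ1 θ2) (.par X Y)
  | sumL {X' X Y : Proc} {θ : PLab} :
      Bwd X' θ X → Y.keys = ∅ → Bwd (.sum X' Y) (.sum .L θ) (.sum X Y)
  | sumR {X Y' Y : Proc} {θ : PLab} :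
      Bwd Y' θ Y → X.keys = ∅ → Bwd (.sum X Y') (.sum .R θ) (.sum X Y)

/-- A combined step: forward if `d = true`, backward if `d = false`. -/
def Step (X : Proc) (d : Bool) (θ : PLab) (Y : Proc) : Prop :=
  if d then Fwd X θ Y else Bwd X θ Y

/-- Transitions of CCSKP (forward or backward). -/
structure Tr : Type where
  src : Proc
  fwd? : Bool
  lbl : PLab
  tgt : Proc
deriving DecidableEq

/-- A transition is valid if it is derivable in the LTS. -/
def Tr.Valid (t : Tr) : Prop := Step t.src t.fwd? t.lbl t.tgt

/-- The reverse of a transition. -/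
def Tr.rev (t : Tr) : Tr := ⟨t.tgt, !t.fwd?, t.lbl, t.src⟩

/-- The key of a transition. -/
def Tr.key (t : Tr) : Key := t.lbl.key

/-- Existence of a path between two processes. -/
inductive Reach : Proc → Proc → Prop where
  | refl (X : Proc) : Reach X X
  | step {X Y Z : Proc} {d : Bool} {θ : PLab} :
      Step X d θ Y → Reach Y Z → Reach X Z

/-- t is connected to u: there is a path from the source of t to the target of u. -/
def Tr.ConnectedTo (t u : Tr) : Prop := Reach t.src u.tgt

/-- t and u are connected. -/
def Tr.Connected (t u : Tr) : Prop := t.ConnectedTo u ∨ u.ConnectedTo t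

/-- X cannot perform a backward transition. -/
def Rooted (X : Proc) : Prop := ∀ (θ : PLab) (Y : Proc), ¬ Bwd X θ Y

/-- Reachable processes: target of a rooted path from a standard origin. -/
def Reachable (X : Proc) : Prop := ∃ O : Proc, O.Std ∧ Rooted O ∧ Reach O X

/-- The connectivity relation ⌢ on proof keyed labels. -/
inductive Conn : PLab → PLab → Prop where
  | a1 {α : Act} {k : Key} {θ : PLab} : Conn (.act α k) θ
  | a2 {θ : PLab} {α : Act} {k : Key} :
      (∀ (β : Act) (k' : Key), θ ≠ .act β k') → Conn θ (.act α k)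
  | c1 {d : Dir} {θ θ' : PLab} : Conn θ θ' → Conn (.sum d θ) (.sum d θ')
  | c2 {d : Dir} {θ θ' : PLab} : Conn (.sum d θ) (.sum d.op θ')
  | p1 {d : Dir} {θ θ' : PLab} : Conn θ θ' → Conn (.par d θ) (.par d θ')
  | p2 {d : Dir} {θ θ' : PLab} : Conn (.par d θ) (.par d.op θ')
  | s1 {d : Dir} {θ θL θR : PLab} : Conn θ (d.sel θL θR) → Conn (.par d θ) (.syn θL θR)
  | s2 {d : Dir} {θ θL θR : PLab} : Conn (d.sel θL θR) θ → Conn (.syn θL θR) (.par d θ)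
  | s3 {θ1 θ2 θ1' θ2' : PLab} : Conn θ1 θ1' → Conn θ2 θ2' → Conn (.syn θ1 θ2) (.syn θ1' θ2')

/-- The dependence relation ⊙ on proof keyed labels. -/
inductive Dep : PLab → PLab → Prop where
  | a1 {α : Act} {k : Key} {θ : PLab} : Dep (.act α k) θ
  | a2 {θ : PLab} {α : Act} {k : Key} :
      (∀ (β : Act) (k' : Key), θ ≠ .act β k') → Dep θ (.act α k)
  | c1 {d : Dir} {θ θ' : PLab} : Dep θ θ' → Dep (.sum d θ) (.sum d θ')
  | c2 {d : Dir} {θ θ' : PLab} : Dep (.sum d θ) (.sum d.op θ')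
  | p1 {d : Dir} {θ θ' : PLab} : Dep θ θ' → Dep (.par d θ) (.par d θ')
  | p2k {d : Dir} {θ θ' : PLab} : θ.key = θ'.key → Dep (.par d θ) (.par d.op θ')
  | s1 {d : Dir} {θ θL θR : PLab} : Dep θ (d.sel θL θR) → Dep (.par d θ) (.syn θL θR)
  | s2 {d : Dir} {θ θL θR : PLab} : Dep (d.sel θL θR) θ → Dep (.syn θL θR) (.par d θ)
  | s3a {θ1 θ2 θ1' θ2' : PLab} : Dep θ1 θ1' → Conn θ2 θ2' → Dep (.syn θ1 θ2) (.syn θ1' θ2')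
  | s3b {θ1 θ2 θ1' θ2' : PLab} : Conn θ1 θ1' → Dep θ2 θ2' → Dep (.syn θ1 θ2) (.syn θ1' θ2')

/-- The independence relation ι on proof keyed labels. -/
inductive Ind : PLab → PLab → Prop where
  | c1 {d : Dir} {θ θ' : PLab} : Ind θ θ' → Ind (.sum d θ) (.sum d θ')
  | p1 {d : Dir} {θ θ' : PLab} : Ind θ θ' → Ind (.par d θ) (.par d θ')
  | p2k {d : Dir} {θ θ' : PLab} : θ.key ≠ θ'.key → Ind (.par d θ) (.par d.op θ')
  | s1 {d : Dir} {θ θL θR : PLab} : Ind θ (d.sel θL θR) → Ind (.par d θ) (.syn θL θR)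
  | s2 {d : Dir} {θ θL θR : PLab} : Ind (d.sel θL θR) θ → Ind (.syn θL θR) (.par d θ)
  | s3 {θ1 θ2 θ1' θ2' : PLab} : Ind θ1 θ1' → Ind θ2 θ2' → Ind (.syn θ1 θ2) (.syn θ1' θ2')

/-- Independence of transitions: connected transitions with independent labels. -/
def Tr.ind (t u : Tr) : Prop := t.Valid ∧ u.Valid ∧ t.Connected u ∧ Ind t.lbl u.lbl

/-- Dependence of transitions: connected transitions with dependent labels. -/
def Tr.dep (t u : Tr) : Prop := t.Valid ∧ u.Valid ∧ t.Connected u ∧ Dep t.lbl u.lbl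

end CCSKP

namespace CCSKP

lemma Bwd.key_mem {X θ Y} (h : Bwd X θ Y) : θ.key ∈ X.keys := by
  induction h with
  | act _ => simp [Proc.keys, PLab.key]
  | pre _ _ ih => simp [Proc.keys, PLab.key]; right; exact ih
  | res _ _ _ ih => exact ih
  | parL _ _ ih => simp [Proc.keys, PLab.key]; exact Or.inl ih
  | parR _ _ ih => simp [Proc.keys, PLab.key]; exact Or.inr ih
  | syn _ _ _ _ _ _ _ ih1 _ => simp [Proc.keys, PLab.key]; exact Or.inl ih1
  | sumL _ _ ih => simp [Proc.keys, PLab.key]; exact Or.inl ih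
  | sumR _ _ ih => simp [Proc.keys, PLab.key]; exact Or.inr ih

lemma bwd_det {X θ1 Y1} (h1 : Bwd X θ1 Y1) :
    ∀ {θ2 Y2}, Bwd X θ2 Y2 → θ1.key = θ2.key → θ1 = θ2 ∧ Y1 = Y2 := by
  induction h1 with
  | @act α X k hstd =>
    intro θ2 Y2 h2 hk
    cases h2 with
    | act _ => exact ⟨rfl, rfl⟩
    | pre h hne => exact absurd hk.symm hne
  | @pre X' X θ α k h hne ih =>
    intro θ2 Y2 h2 hk
    cases h2 with
    | act _ => exact absurd hk hne
    | pre h' hne' =>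
      obtain ⟨rfl, rfl⟩ := ih h' hk
      exact ⟨rfl, rfl⟩
  | res h hna hnc ih =>
    intro θ2 Y2 h2 hk
    cases h2 with
    | res h' _ _ =>
      obtain ⟨rfl, rfl⟩ := ih h' hk
      exact ⟨rfl, rfl⟩
  | @parL X' X Y θ h hnot ih =>
    intro θ2 Y2 h2 hk
    cases h2 with
    | parL h' hnot' =>
      obtain ⟨rfl, rfl⟩ := ih h' hk
      exact ⟨rfl, rfl⟩
    | parR h' hnot' =>
      exact absurd (hk ▸ h'.key_mem) hnot
    | syn hL hR _ _ _ _ hkey =>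
      exact absurd ((hkey.trans hk.symm) ▸ hR.key_mem) hnot
  | @parR X Y' Y θ h hnot ih =>
    intro θ2 Y2 h2 hk
    cases h2 with
    | parR h' hnot' =>
      obtain ⟨rfl, rfl⟩ := ih h' hk
      exact ⟨rfl, rfl⟩
    | parL h' hnot' =>
      exact absurd (hk ▸ h'.key_mem) hnot
    | syn hL hR _ _ _ _ hkey =>
      exact absurd (hk.symm ▸ hL.key_mem) hnot
  | @syn X' X Y' Y θ1 θ2 hL hR hp1 hp2 hnt hbar hkey ihL ihR =>
    intro θ' Y2 h2 hk
    cases h2 with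
    | parL h' hnot' =>
      have hk' : θ1.key = _ := hk
      exact absurd ((hkey.trans hk') ▸ hR.key_mem) hnot'
    | parR h' hnot' =>
      have hk' : θ1.key = _ := hk
      exact absurd (hk' ▸ hL.key_mem) hnot'
    | @syn _ _ _ _ θ1' θ2' hL' hR' _ _ _ _ hkey' =>
      obtain ⟨rfl, rfl⟩ := ihL hL' hk
      obtain ⟨rfl, rfl⟩ := ihR hR' (hkey.trans hkey'.symm)
      exact ⟨rfl, rfl⟩
  | sumL h hstd ih =>
    intro θ2 Y2 h2 hk
    cases h2 with
    | sumL h' _ =>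
      obtain ⟨rfl, rfl⟩ := ih h' hk
      exact ⟨rfl, rfl⟩
    | sumR h' _ =>
      have := h'.key_mem
      rw [hstd] at this
      simp at this
  | sumR h hstd ih =>
    intro θ2 Y2 h2 hk
    cases h2 with
    | sumR h' _ =>
      obtain ⟨rfl, rfl⟩ := ih h' hk
      exact ⟨rfl, rfl⟩
    | sumL h' _ =>
      have := h'.key_mem
      rw [hstd] at this
      simp at this

/-- **Backward key determinism.** In CCSKP (on reachable processes), coinitial
backward transitions with the same key are equal. -/
theorem backward_key_determinism (t1 t2 : Tr)
    (h1 : t1.Valid) (h2 : t2.Valid) (hr : Reachable t1.src)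
    (hb1 : t1.fwd? = false) (hb2 : t2.fwd? = false)
    (hco : t1.src = t2.src) (hk : t1.key = t2.key) :
    t1 = t2 := by
  obtain ⟨s1, f1, l1, g1⟩ := t1
  obtain ⟨s2, f2, l2, g2⟩ := t2
  cases hb1; cases hb2; cases hco
  simp only [Tr.Valid, Step, if_neg (by simp : ¬(false = true))] at h1 h2
  have hb1 : Bwd s1 l1 g1 := by simpa [Tr.Valid, Step] using h1
  have hb2 : Bwd s1 l2 g2 := by simpa [Tr.Valid, Step] using h2
  obtain ⟨rfl, rfl⟩ := bwd_det hb1 hb2 hk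
  rfl

end CCSKP
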